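/- arXiv:1703.04941 — 6 statements merged into one kernel-verified Lean document; each statement's English description precedes it below -/
import Mathlib

section
/- Let S be a semigroup and let T be a completely isolated subsemigroup of S. Let K be any one of the relations ≤_R, ≤_L, ≤_J, R, L, or J. Then for all x, y ∈ T, x K y holds in S if and only if x K y holds in T. -/
/-! Green's preorders and equivalences on a semigroup `S`, defined via ideals in
`S¹ = WithOne S` (the semigroup with an adjoined identity). -/

section Green
variable {S : Type*} [Semigroup S]

/-- The right ideal `s·S¹` as a subset of `S¹`. -/
def rIdeal (s : S) : Set (WithOne S) := {x | ∃ z : WithOne S, x = (s : WithOne S) * z}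

/-- The left ideal `S¹·s` as a subset of `S¹`. -/
def lIdeal (s : S) : Set (WithOne S) := {x | ∃ z : WithOne S, x = z * (s : WithOne S)}

/-- The two-sided ideal `S¹·s·S¹` as a subset of `S¹`. -/
def jIdeal (s : S) : Set (WithOne S) :=
  {x | ∃ z₁ z₂ : WithOne S, x = z₁ * (s : WithOne S) * z₂}

/-- Green's preorder `s ≤_R t` : `sS¹ ⊆ tS¹`. -/
def leR (s t : S) : Prop := rIdeal s ⊆ rIdeal t

/-- Green's preorder `s ≤_L t` : `S¹s ⊆ S¹t`. -/
def leL (s t : S) : Prop := lIdeal s ⊆ lIdeal t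

/-- Green's preorder `s ≤_J t` : `S¹sS¹ ⊆ S¹tS¹`. -/
def leJ (s t : S) : Prop := jIdeal s ⊆ jIdeal t

/-- Green's relation `R`. -/
def eqvR (s t : S) : Prop := leR s t ∧ leR t s

/-- Green's relation `L`. -/
def eqvL (s t : S) : Prop := leL s t ∧ leL t s

/-- Green's relation `J`. -/
def eqvJ (s t : S) : Prop := leJ s t ∧ leJ t s

end Green

/-- A subsemigroup `T` of `S` is completely isolated if `s₁s₂ ∈ T` implies
`s₁ ∈ T` and `s₂ ∈ T`. -/
def CompletelyIsolated {S : Type*} [Semigroup S] (T : Subsemigroup S) : Prop :=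
  ∀ s₁ s₂ : S, s₁ * s₂ ∈ T → s₁ ∈ T ∧ s₂ ∈ T

/-! The embedding `T¹ → S¹` is an injective monoid morphism whose image is again completely
isolated. Hence whenever `x = z₁ y z₂` in `S¹` with `x, y ∈ T`, the factors `z₁, z₂` already lie
in `T¹`, and the equation can be pulled back to `T¹`. -/

section Green
variable {S : Type*} [Semigroup S]

theorem leR_iff_exists_eq_mul {s t : S} :
    leR s t ↔ ∃ z : WithOne S, (s : WithOne S) = t * z :=
  ⟨fun h => h ⟨1, (mul_one _).symm⟩,
    fun ⟨z, hz⟩ _ ⟨w, hw⟩ => ⟨z * w, by rw [hw, hz, mul_assoc]⟩⟩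

theorem leL_iff_exists_eq_mul {s t : S} :
    leL s t ↔ ∃ z : WithOne S, (s : WithOne S) = z * t :=
  ⟨fun h => h ⟨1, (one_mul _).symm⟩,
    fun ⟨z, hz⟩ _ ⟨w, hw⟩ => ⟨w * z, by rw [hw, hz, mul_assoc]⟩⟩

theorem leJ_iff_exists_eq_mul_mul {s t : S} :
    leJ s t ↔ ∃ z₁ z₂ : WithOne S, (s : WithOne S) = z₁ * t * z₂ :=
  ⟨fun h => h ⟨1, 1, by rw [one_mul, mul_one]⟩,
    fun ⟨z₁, z₂, hz⟩ _ ⟨w₁, w₂, hw⟩ => ⟨w₁ * z₁, z₂ * w₂, by rw [hw, hz]; simp only [mul_assoc]⟩⟩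

end Green

namespace MonoidHom

variable {M N : Type*} [Monoid M] [Monoid N] {f : M →* N}

theorem exists_map_eq_map_mul_iff (hf : Function.Injective f)
    (hI : CompletelyIsolated (mrange f).toSubsemigroup) {x y : M} :
    (∃ z, f x = f y * z) ↔ ∃ z, x = y * z := by
  refine ⟨fun ⟨z, hz⟩ => ?_, fun ⟨z, hz⟩ => ⟨f z, by rw [hz, map_mul]⟩⟩
  obtain ⟨w, rfl⟩ := (hI _ _ (hz ▸ mem_mrange.2 ⟨x, rfl⟩)).2
  exact ⟨w, hf (by rw [hz, map_mul])⟩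

theorem exists_map_eq_mul_map_iff (hf : Function.Injective f)
    (hI : CompletelyIsolated (mrange f).toSubsemigroup) {x y : M} :
    (∃ z, f x = z * f y) ↔ ∃ z, x = z * y := by
  refine ⟨fun ⟨z, hz⟩ => ?_, fun ⟨z, hz⟩ => ⟨f z, by rw [hz, map_mul]⟩⟩
  obtain ⟨w, rfl⟩ := (hI _ _ (hz ▸ mem_mrange.2 ⟨x, rfl⟩)).1
  exact ⟨w, hf (by rw [hz, map_mul])⟩

theorem exists_map_eq_mul_map_mul_iff (hf : Function.Injective f)
    (hI : CompletelyIsolated (mrange f).toSubsemigroup) {x y : M} :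
    (∃ z₁ z₂, f x = z₁ * f y * z₂) ↔ ∃ z₁ z₂, x = z₁ * y * z₂ := by
  refine ⟨fun ⟨z₁, z₂, hz⟩ => ?_, fun ⟨z₁, z₂, hz⟩ => ⟨f z₁, f z₂, by rw [hz, map_mul, map_mul]⟩⟩
  obtain ⟨hz₁y, ⟨w₂, rfl⟩⟩ := hI _ _ (hz ▸ mem_mrange.2 ⟨x, rfl⟩)
  obtain ⟨w₁, rfl⟩ := (hI _ _ hz₁y).1
  exact ⟨w₁, w₂, hf (by rw [hz, map_mul, map_mul])⟩

end MonoidHom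

namespace CompletelyIsolated

variable {S : Type*} [Semigroup S] {T : Subsemigroup S}

theorem coe_mem_mrange_withOne_iff {s : S} :
    (s : WithOne S) ∈ MonoidHom.mrange (WithOne.mapMulHom (MulMemClass.subtype T)) ↔ s ∈ T := by
  refine ⟨fun ⟨w, hw⟩ => ?_, fun hs => ⟨((⟨s, hs⟩ : T) : WithOne T), rfl⟩⟩
  induction w using WithOne.recOneCoe with
  | one => exact absurd hw WithOne.one_ne_coe
  | coe t => exact WithOne.coe_injective hw ▸ t.2

theorem withOne (hT : CompletelyIsolated T) :
    CompletelyIsolated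
      (MonoidHom.mrange (WithOne.mapMulHom (MulMemClass.subtype T))).toSubsemigroup := by
  intro a b hab
  simp only [Submonoid.mem_toSubsemigroup] at hab ⊢
  induction a using WithOne.recOneCoe with
  | one => exact ⟨one_mem _, by rwa [one_mul] at hab⟩
  | coe a =>
    induction b using WithOne.recOneCoe with
    | one => exact ⟨by rwa [mul_one] at hab, one_mem _⟩
    | coe b =>
      rw [← WithOne.coe_mul, coe_mem_mrange_withOne_iff] at hab
      simpa only [coe_mem_mrange_withOne_iff] using hT a b hab

end CompletelyIsolated

/-- For a completely isolated subsemigroup `T` of a semigroup `S`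
and any of the six Green relations `K ∈ {≤_R, ≤_L, ≤_J, R, L, J}`, two elements of
`T` are `K`-related in `S` iff they are `K`-related in `T`. -/
theorem green_relations_completely_isolated {S : Type*} [Semigroup S]
    (T : Subsemigroup S) (hT : CompletelyIsolated T) (x y : T) :
    (leR (x : S) (y : S) ↔ leR x y) ∧
    (leL (x : S) (y : S) ↔ leL x y) ∧
    (leJ (x : S) (y : S) ↔ leJ x y) ∧
    (eqvR (x : S) (y : S) ↔ eqvR x y) ∧
    (eqvL (x : S) (y : S) ↔ eqvL x y) ∧
    (eqvJ (x : S) (y : S) ↔ eqvJ x y) := by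
  set ι := WithOne.mapMulHom (MulMemClass.subtype T)
  have hι : Function.Injective ι := WithOne.mapMulHom_injective (MulMemClass.subtype_injective T)
  have hI := hT.withOne
  have hcoe (u : T) : ((u : S) : WithOne S) = ι u := rfl
  have hle (u v : T) :
      (leR (u : S) v ↔ leR u v) ∧ (leL (u : S) v ↔ leL u v) ∧ (leJ (u : S) v ↔ leJ u v) := by
    simp only [leR_iff_exists_eq_mul, leL_iff_exists_eq_mul, leJ_iff_exists_eq_mul_mul, hcoe]
    exact ⟨ι.exists_map_eq_map_mul_iff hι hI, ι.exists_map_eq_mul_map_iff hι hI,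
      ι.exists_map_eq_mul_map_mul_iff hι hI⟩
  obtain ⟨hR, hL, hJ⟩ := hle x y
  obtain ⟨hR', hL', hJ'⟩ := hle y x
  exact ⟨hR, hL, hJ, and_congr hR hR', and_congr hL hL', and_congr hJ hJ'⟩
end

section
/- Let T be a transformation semigroup on a set Q of n states, generated by a finite set Σ of transformations. Then there exists a minimal deterministic finite automaton A with n+1 states over an alphabet of size |Σ|+1 such that T is isomorphic to a completely isolated subsemigroup of the transition semigroup T(A). -/
/-- (Total) transformations on `Q`, with left-to-right composition:
`q·(fg) = (q·f)·g`. -/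
def Transf (Q : Type*) : Type _ := Q → Q

instance {Q : Type*} : Mul (Transf Q) := ⟨fun f g => fun q => g (f q)⟩

instance {Q : Type*} : Semigroup (Transf Q) where
  mul_assoc _ _ _ := rfl

/-- A deterministic finite automaton is minimal if every state is reachable from
the start state and no two distinct states accept the same language. -/
def DFA.IsMinimal {α σ : Type*} (M : DFA α σ) : Prop :=
  (∀ q : σ, ∃ w : List α, M.evalFrom M.start w = q) ∧
  (∀ p q : σ, (∀ w : List α, (M.evalFrom p w ∈ M.accept ↔ M.evalFrom q w ∈ M.accept)) → p = q)

/-- The transition semigroup of a DFA: the transformation semigroup on the state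
set generated by the actions of the letters. -/
def transitionSemigroup {α σ : Type*} (M : DFA α σ) : Subsemigroup (Transf σ) :=
  Subsemigroup.closure {f : Transf σ | ∃ a : α, f = fun q => M.step q a}

namespace TSIsoAux

variable {n : ℕ} {Q : Type}

/-- Extend a transformation of `Q ≃ Fin n` to `Fin (n+1)` fixing the last state. -/
def extT (e : Q ≃ Fin n) (f : Transf Q) : Transf (Fin (n + 1)) :=
  fun x => if h : (x : ℕ) < n then Fin.castSucc (e (f (e.symm ⟨x, h⟩))) else x

theorem extT_last (e : Q ≃ Fin n) (f : Transf Q) : extT e f (Fin.last n) = Fin.last n := by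
  simp [extT]

theorem extT_mul (e : Q ≃ Fin n) (f g : Transf Q) :
    extT e (f * g) = extT e f * extT e g := by
  funext x
  show extT e (f * g) x = extT e g (extT e f x)
  by_cases h : (x : ℕ) < n
  · simp only [extT, dif_pos h]
    have h1 : ((Fin.castSucc (e (f (e.symm ⟨x, h⟩)))) : ℕ) < n := (e _).isLt
    rw [dif_pos h1]
    have h2 : (⟨((Fin.castSucc (e (f (e.symm ⟨x, h⟩)))) : ℕ), h1⟩ : Fin n)
        = e (f (e.symm ⟨x, h⟩)) := Fin.ext rfl
    rw [h2, Equiv.symm_apply_apply]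
    rfl
  · simp only [extT, dif_neg h]

theorem extT_injective (e : Q ≃ Fin n) : Function.Injective (extT e) := by
  intro f g hfg
  funext q
  have h := congrFun hfg (Fin.castSucc (e q))
  have hlt : ((Fin.castSucc (e q)) : ℕ) < n := (e q).isLt
  simp only [extT, dif_pos hlt] at h
  have h2 : (⟨((Fin.castSucc (e q)) : ℕ), hlt⟩ : Fin n) = e q := Fin.ext rfl
  rw [h2, Equiv.symm_apply_apply] at h
  exact e.injective (Fin.castSucc_injective _ h)

/-- `extT` as a semigroup hom. -/
def extHom (e : Q ≃ Fin n) : Transf Q →ₙ* Transf (Fin (n + 1)) :=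
  ⟨extT e, fun f g => extT_mul e f g⟩

/-- The extra letter: `last ↦ 0`, and `i ↦ min (i+1) (n-1)` on the old states. -/
def cT (n : ℕ) : Transf (Fin (n + 1)) :=
  fun x => if (x : ℕ) < n then ⟨min ((x : ℕ) + 1) (n - 1), by omega⟩ else ⟨0, by omega⟩

variable (e : Q ≃ Fin n) (Sig : Finset (Transf Q))

noncomputable def eS : ↥Sig ≃ Fin Sig.card := Fintype.equivFinOfCardEq (Fintype.card_coe Sig)

/-- Transformation associated to each letter. -/
noncomputable def stepF (a : Fin (Sig.card + 1)) : Transf (Fin (n + 1)) :=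
  if h : (a : ℕ) < Sig.card then extT e (((eS Sig).symm ⟨a, h⟩ : ↥Sig) : Transf Q) else cT n

noncomputable def mkDFA : DFA (Fin (Sig.card + 1)) (Fin (n + 1)) where
  step := fun x a => stepF e Sig a x
  start := Fin.last n
  accept := {x | (x : ℕ) = n - 1}

theorem stepF_last : stepF e Sig (Fin.last Sig.card) = cT n := by
  rw [stepF, dif_neg]
  simp

theorem stepF_mem (f : Transf Q) (hf : f ∈ Sig) :
    extT e f ∈ Set.range (stepF e Sig) := by
  refine ⟨Fin.castSucc (eS Sig ⟨f, hf⟩), ?_⟩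
  have h : ((Fin.castSucc (eS Sig ⟨f, hf⟩)) : ℕ) < Sig.card := (eS Sig ⟨f, hf⟩).isLt
  rw [stepF, dif_pos h]
  have h2 : (⟨((Fin.castSucc (eS Sig ⟨f, hf⟩)) : ℕ), h⟩ : Fin Sig.card)
      = eS Sig ⟨f, hf⟩ := Fin.ext rfl
  rw [h2, Equiv.symm_apply_apply]

theorem gens_eq :
    transitionSemigroup (mkDFA e Sig) = Subsemigroup.closure (Set.range (stepF e Sig)) := by
  rw [transitionSemigroup]
  congr 1
  ext f
  constructor
  · rintro ⟨a, rfl⟩; exact ⟨a, rfl⟩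
  · rintro ⟨a, rfl⟩; exact ⟨a, rfl⟩

theorem evalC (m : ℕ) (x : Fin (n + 1)) :
    (mkDFA e Sig).evalFrom x (List.replicate m (Fin.last Sig.card)) =
    ⟨if (x : ℕ) < n then min ((x : ℕ) + m) (n - 1)
      else if m = 0 then n else min (m - 1) (n - 1), by split_ifs <;> first | omega | contradiction⟩ := by
  induction m generalizing x with
  | zero =>
    rw [List.replicate_zero, DFA.evalFrom_nil, Fin.eq_mk_iff_val_eq]
    have := x.isLt
    split_ifs <;> first | omega | contradiction
  | succ m ih =>
    rw [List.replicate_succ]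
    show (mkDFA e Sig).evalFrom ((mkDFA e Sig).step x (Fin.last Sig.card)) _ = _
    have hstep : (mkDFA e Sig).step x (Fin.last Sig.card) = cT n x := by
      show stepF e Sig (Fin.last Sig.card) x = _
      rw [stepF_last]
    rw [hstep, ih]
    have hy : ((cT n x : Fin (n + 1)) : ℕ)
        = if (x : ℕ) < n then min ((x : ℕ) + 1) (n - 1) else 0 := by
      rw [cT]; split_ifs <;> rfl
    have hx := x.isLt
    rw [Fin.mk_eq_mk, hy]
    rcases Nat.lt_or_ge (x : ℕ) n with h | h
    · rw [if_pos h, if_pos h]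
      split_ifs <;> first | omega | contradiction
    · rw [if_neg (Nat.not_lt.mpr h), if_neg (Nat.not_lt.mpr h)]
      split_ifs <;> first | omega | contradiction

theorem mem_accept_iff (m : ℕ) (x : Fin (n + 1)) :
    (mkDFA e Sig).evalFrom x (List.replicate m (Fin.last Sig.card)) ∈ (mkDFA e Sig).accept ↔
    (if (x : ℕ) < n then n - 1 - (x : ℕ) else n) ≤ m := by
  rw [evalC]
  show (_ : Fin (n+1)).val = n - 1 ↔ _
  simp only [Fin.val_mk]
  have hx := x.isLt
  split_ifs <;> first | omega | contradiction

theorem onlyLast (hn : 0 < n) {s : Transf (Fin (n + 1))}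
    (hs : s ∈ Subsemigroup.closure (Set.range (stepF e Sig))) :
    ∀ x, s x = Fin.last n → x = Fin.last n := by
  induction hs using Subsemigroup.closure_induction with
  | mem f hf =>
    obtain ⟨a, rfl⟩ := hf
    intro x hx
    by_cases ha : (a : ℕ) < Sig.card
    · rw [stepF, dif_pos ha] at hx
      by_cases hxn : (x : ℕ) < n
      · exfalso
        have h := congrArg Fin.val hx
        rw [extT, dif_pos hxn] at h
        simp only [Fin.coe_castSucc, Fin.val_last] at h
        exact absurd h (Nat.ne_of_lt (e _).isLt)
      · exact Fin.ext (by have := x.isLt; simp only [Fin.val_last]; omega)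
    · exfalso
      rw [stepF, dif_neg ha] at hx
      have h := congrArg Fin.val hx
      rw [cT] at hx
      have h2 : ((if (x : ℕ) < n then (⟨min ((x : ℕ) + 1) (n - 1), by omega⟩ : Fin (n+1))
          else ⟨0, by omega⟩) : Fin (n+1)).val = n := congrArg Fin.val hx
      split_ifs at h2 <;> simp only [Fin.val_mk] at h2 <;> omega
  | mul a b _ _ pa pb =>
    intro x hx
    exact pa x (pb (a x) hx)

theorem fixLast {s : Transf (Fin (n + 1))}
    (hs : s ∈ Subsemigroup.closure (extT e '' (Sig : Set (Transf Q)))) :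
    s (Fin.last n) = Fin.last n := by
  induction hs using Subsemigroup.closure_induction with
  | mem f hf =>
    obtain ⟨g, _, rfl⟩ := hf
    exact extT_last e g
  | mul a b _ _ pa pb =>
    show b (a (Fin.last n)) = Fin.last n
    rw [pa, pb]

theorem memU₀ (hn : 0 < n) {s : Transf (Fin (n + 1))}
    (hs : s ∈ Subsemigroup.closure (Set.range (stepF e Sig)))
    (hfix : s (Fin.last n) = Fin.last n) :
    s ∈ Subsemigroup.closure (extT e '' (Sig : Set (Transf Q))) := by
  induction hs using Subsemigroup.closure_induction with
  | mem f hf =>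
    obtain ⟨a, rfl⟩ := hf
    by_cases ha : (a : ℕ) < Sig.card
    · rw [stepF, dif_pos ha]
      exact Subsemigroup.subset_closure
        ⟨_, Finset.mem_coe.mpr ((eS Sig).symm ⟨a, ha⟩).2, rfl⟩
    · exfalso
      rw [stepF, dif_neg ha] at hfix
      have h2 : ((if ((Fin.last n : Fin (n+1)) : ℕ) < n then
          (⟨min ((Fin.last n : Fin (n+1)) + 1) (n - 1), by omega⟩ : Fin (n+1))
          else ⟨0, by omega⟩) : Fin (n+1)).val = n := congrArg Fin.val hfix
      rw [if_neg (by simp)] at h2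
      simp only [Fin.val_mk] at h2
      omega
  | mul a b ha hb pa pb =>
    have h1 : a (Fin.last n) = Fin.last n :=
      onlyLast e Sig hn hb (a (Fin.last n)) hfix
    have h2 : b (Fin.last n) = Fin.last n := by
      have : b (a (Fin.last n)) = Fin.last n := hfix
      rwa [h1] at this
    exact mul_mem (pa h1) (pb h2)

end TSIsoAux

open TSIsoAux in
/-- For every transformation semigroup `T` on a set `Q` of `n`
states, generated by a finite set `Sig`, there is a minimal DFA `M` with `n + 1`
states over an alphabet of size `|Sig| + 1` such that `T` is isomorphic to a
completely isolated subsemigroup of the transition semigroup of `M`. -/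
theorem transformation_semigroup_isolated_in_minimal_automaton
    (n : ℕ) (Q : Type) [Fintype Q] (hQ : Fintype.card Q = n)
    (Sig : Finset (Transf Q)) (T : Subsemigroup (Transf Q))
    (hT : T = Subsemigroup.closure (Sig : Set (Transf Q))) :
    ∃ M : DFA (Fin (Sig.card + 1)) (Fin (n + 1)),
      M.IsMinimal ∧
      ∃ U : Subsemigroup ↥(transitionSemigroup M),
        CompletelyIsolated U ∧ Nonempty (↥T ≃* ↥U) := by
  classical
  obtain e : Q ≃ Fin n := Fintype.equivFinOfCardEq hQ
  refine ⟨mkDFA e Sig, ⟨?_, ?_⟩, ?_⟩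
  · -- reachability
    intro q
    by_cases h : (q : ℕ) < n
    · refine ⟨List.replicate ((q : ℕ) + 1) (Fin.last Sig.card), ?_⟩
      rw [show (mkDFA e Sig).start = Fin.last n from rfl, evalC]
      apply Fin.ext
      simp only [Fin.val_mk, Fin.val_last]
      split_ifs <;> first | omega | contradiction
    · refine ⟨[], ?_⟩
      rw [DFA.evalFrom_nil]
      exact Fin.ext (by have := q.isLt; show n = (q : ℕ); omega)
  · -- distinguishability
    intro p q H
    have h1 := (H (List.replicate (if (q : ℕ) < n then n - 1 - (q : ℕ) else n)
        (Fin.last Sig.card))).mpr ((mem_accept_iff e Sig _ q).mpr le_rfl)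
    have h2 := (H (List.replicate (if (p : ℕ) < n then n - 1 - (p : ℕ) else n)
        (Fin.last Sig.card))).mp ((mem_accept_iff e Sig _ p).mpr le_rfl)
    rw [mem_accept_iff] at h1 h2
    have hp := p.isLt
    have hq := q.isLt
    apply Fin.ext
    split_ifs at h1 h2 <;> omega
  · -- the isolated subsemigroup
    set S := transitionSemigroup (mkDFA e Sig) with hS
    have hSgen : S = Subsemigroup.closure (Set.range (stepF e Sig)) := gens_eq e Sig
    set U₀ := Subsemigroup.closure (extT e '' (Sig : Set (Transf Q))) with hU₀
    have hU₀S : U₀ ≤ S := by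
      rw [hSgen]
      apply Subsemigroup.closure_le.mpr
      rintro f ⟨g, hg, rfl⟩
      exact Subsemigroup.subset_closure (stepF_mem e Sig g hg)
    refine ⟨U₀.comap (MulMemClass.subtype S), ?_, ?_⟩
    · -- completely isolated
      intro s₁ s₂ h12
      have hm : ((s₁ : Transf (Fin (n+1))) * (s₂ : Transf (Fin (n+1)))) ∈ U₀ := h12
      rcases Nat.eq_zero_or_pos n with hn | hn
      · subst hn
        have hsub : Subsingleton (Transf (Fin (0 + 1))) :=
          inferInstanceAs (Subsingleton (Fin 1 → Fin 1))
        constructor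
        · show (s₁ : Transf (Fin (0+1))) ∈ U₀
          rwa [hsub.elim ((s₁ : Transf (Fin (0+1))) * (s₂ : Transf (Fin (0+1))))
            (s₁ : Transf (Fin (0+1)))] at hm
        · show (s₂ : Transf (Fin (0+1))) ∈ U₀
          rwa [hsub.elim ((s₁ : Transf (Fin (0+1))) * (s₂ : Transf (Fin (0+1))))
            (s₂ : Transf (Fin (0+1)))] at hm
      · have hfix : ((s₁ : Transf (Fin (n+1))) * (s₂ : Transf (Fin (n+1)))) (Fin.last n)
            = Fin.last n := fixLast e Sig hm
        have hs₁ : (s₁ : Transf (Fin (n+1))) ∈ Subsemigroup.closure (Set.range (stepF e Sig)) :=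
          hSgen ▸ s₁.2
        have hs₂ : (s₂ : Transf (Fin (n+1))) ∈ Subsemigroup.closure (Set.range (stepF e Sig)) :=
          hSgen ▸ s₂.2
        have h1 : (s₁ : Transf (Fin (n+1))) (Fin.last n) = Fin.last n :=
          onlyLast e Sig hn hs₂ _ hfix
        have h2 : (s₂ : Transf (Fin (n+1))) (Fin.last n) = Fin.last n := by
          have hh : (s₂ : Transf (Fin (n+1))) ((s₁ : Transf (Fin (n+1))) (Fin.last n))
              = Fin.last n := hfix
          rwa [h1] at hh
        exact ⟨memU₀ e Sig hn hs₁ h1, memU₀ e Sig hn hs₂ h2⟩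
    · -- the isomorphism
      have hmap : T.map (extHom e) = U₀ := by
        rw [hT, MulHom.map_mclosure]
        rfl
      refine ⟨?_⟩
      refine (Subsemigroup.equivMapOfInjective T (extHom e) (extT_injective e)).trans ?_
      refine (MulEquiv.subsemigroupCongr hmap).trans ?_
      exact
        { toFun := fun x => ⟨⟨x.1, hU₀S x.2⟩, x.2⟩
          invFun := fun u => ⟨u.1.1, u.2⟩
          left_inv := fun _ => rfl
          right_inv := fun _ => rfl
          map_mul' := fun _ _ => rfl }
end

section
/- Let T be a transformation semigroup on a set of n states, generated by a finite set Σ of transformations. Then there exists a transformation semigroup U on n+3 states, generated by |Σ|+1 transformations, which has at least |T| pairwise distinct J-classes. -/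
theorem leJ_iff_exists {S : Type*} [Semigroup S] {s t : S} :
    leJ s t ↔ ∃ z₁ z₂ : WithOne S, (s : WithOne S) = z₁ * t * z₂ := by
  refine ⟨fun h => h ⟨1, 1, by rw [one_mul, mul_one]⟩, ?_⟩
  rintro ⟨z₁, z₂, hs⟩ x ⟨y₁, y₂, rfl⟩
  exact ⟨y₁ * z₁, z₂ * y₂, by simp only [hs, mul_assoc]⟩

theorem leJ.map {S S' : Type*} [Semigroup S] [Semigroup S'] (f : S →ₙ* S') {s t : S}
    (h : leJ s t) : leJ (f s) (f t) := by
  obtain ⟨z₁, z₂, hs⟩ := leJ_iff_exists.mp h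
  refine leJ_iff_exists.mpr ⟨WithOne.mapMulHom f z₁, WithOne.mapMulHom f z₂, ?_⟩
  simpa only [map_mul, WithOne.mapMulHom_coe] using congrArg (WithOne.mapMulHom f) hs

theorem eq_or_exists_of_leJ {S : Type*} [Semigroup S] {s t : S} (h : leJ s t) :
    s = t ∨ (∃ a, s = a * t) ∨ (∃ b, s = t * b) ∨ ∃ a b, s = a * t * b := by
  obtain ⟨z₁, z₂, hs⟩ := leJ_iff_exists.mp h
  match z₁, z₂, hs with
  | 1, 1, hs => exact .inl (by simpa using hs)
  | (a : S), 1, hs => exact .inr (.inl ⟨a, by simpa [← WithOne.coe_mul] using hs⟩)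
  | 1, (b : S), hs => exact .inr (.inr (.inl ⟨b, by simpa [← WithOne.coe_mul] using hs⟩))
  | (a : S), (b : S), hs =>
    exact .inr (.inr (.inr ⟨a, b, by simpa [← WithOne.coe_mul] using hs⟩))

def Transf.congr {α β : Type*} (e : α ≃ β) : Transf α ≃* Transf β where
  toEquiv := e.arrowCongr e
  map_mul' f g := funext fun b => by
    show e (g (f (e.symm b))) = e (g (e.symm (e (f (e.symm b)))))
    rw [e.symm_apply_apply]

theorem exists_leJ_injective_map {M N X : Type*} [Semigroup M] [Semigroup N] (Ψ : M ≃* N)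
    (G : Finset M) (g : X → Subsemigroup.closure (G : Set M))
    (hg : ∀ x y, leJ (g x) (g y) → x = y) :
    ∃ g' : X → Subsemigroup.closure ((G.map Ψ.toEquiv.toEmbedding : Finset N) : Set N),
      ∀ x y, leJ (g' x) (g' y) → x = y := by
  let φ : Subsemigroup.closure (G : Set M) ≃*
      Subsemigroup.closure ((G.map Ψ.toEquiv.toEmbedding : Finset N) : Set N) :=
    (Ψ.subsemigroupMap _).trans <| MulEquiv.subsemigroupCongr <| by
      rw [MulHom.map_mclosure, Finset.coe_map]; rfl
  refine ⟨fun x => φ (g x), fun x y h => hg x y ?_⟩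
  simpa only [MulEquiv.coe_toMulHom, MulEquiv.symm_apply_apply] using h.map φ.symm.toMulHom

theorem Transf.exists_finset_card_eq {α : Type*} [Fintype α] {k : ℕ} (hk : k ≤ Fintype.card α) :
    ∃ G : Finset (Transf α), G.card = k := by
  obtain ⟨s, -, hs⟩ := Finset.exists_subset_card_eq (s := Finset.univ) hk
  exact ⟨s.map ⟨fun a _ => a, fun a b h => congrFun h a⟩, by simpa using hs⟩

@[simp]
theorem Transf.mul_apply {α : Type*} (f g : Transf α) (x : α) : (f * g) x = g (f x) := rfl

namespace Extension

/-- `Q` with three new states `e₁ = none`, `e₂ = some none` and `e₃ = some (some none)`. -/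
abbrev States (Q : Type*) : Type _ := Option (Option (Option Q))

variable {Q : Type*}

local notation "e₁" => (none : States _)
local notation "e₂" => (some none : States _)
local notation "e₃" => (some (some none) : States _)

def inQ (q : Q) : States Q := some (some (some q))

theorem inQ_injective : Function.Injective (inQ : Q → States Q) := fun _ _ h => by
  simpa [inQ] using h

variable (q₀ : Q)

def liftGen (σ : Transf Q) : Transf (States Q) := fun x =>
  match x with
  | e₁ => inQ q₀
  | e₂ => e₂
  | e₃ => inQ q₀
  | some (some (some q)) => inQ (σ q)

def shift : Transf (States Q) := fun x =>
  match x with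
  | e₁ => e₂
  | e₂ => e₃
  | e₃ => inQ q₀
  | some (some (some q)) => inQ q

theorem liftGen_injective : Function.Injective (liftGen q₀) := fun _ _ h =>
  funext fun q => inQ_injective (congrFun h (inQ q))

theorem shift_notMem_map_liftGen (Sig : Finset (Transf Q)) :
    shift q₀ ∉ Sig.map ⟨liftGen q₀, liftGen_injective q₀⟩ := by
  simp only [Finset.mem_map, Function.Embedding.coeFn_mk, not_exists, not_and]
  intro σ _ h
  simpa [liftGen, shift] using congrFun h e₂

def gens (Sig : Finset (Transf Q)) : Finset (Transf (States Q)) :=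
  .cons (shift q₀) (Sig.map ⟨liftGen q₀, liftGen_injective q₀⟩) (shift_notMem_map_liftGen q₀ Sig)

theorem card_gens (Sig : Finset (Transf Q)) : (gens q₀ Sig).card = Sig.card + 1 := by
  simp [gens]

def admissible : Subsemigroup (Transf (States Q)) where
  carrier := {u | Set.MapsTo u (Set.range inQ) (Set.range inQ) ∧ (∀ x, u x ≠ e₁) ∧
    u e₃ ∈ Set.range inQ}
  mul_mem' := by
    rintro u w ⟨hu, hu₁, hu₃⟩ ⟨hw, hw₁, -⟩
    exact ⟨hw.comp hu, fun x => hw₁ (u x), hw hu₃⟩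

theorem shift_mem_admissible : shift q₀ ∈ admissible :=
  ⟨by rintro _ ⟨q, rfl⟩; exact ⟨q, rfl⟩, by rintro (_ | _ | _ | q) <;> simp [shift, inQ],
    ⟨q₀, rfl⟩⟩

theorem liftGen_mem_admissible (σ : Transf Q) : liftGen q₀ σ ∈ admissible :=
  ⟨by rintro _ ⟨q, rfl⟩; exact ⟨σ q, rfl⟩, by rintro (_ | _ | _ | q) <;> simp [liftGen, inQ],
    ⟨q₀, rfl⟩⟩

theorem closure_gens_le_admissible (Sig : Finset (Transf Q)) :
    Subsemigroup.closure (gens q₀ Sig : Set (Transf (States Q))) ≤ admissible := by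
  refine Subsemigroup.closure_le.mpr fun u hu => ?_
  simp only [gens, Finset.coe_cons, Finset.coe_map, Function.Embedding.coeFn_mk,
    Set.mem_insert_iff, Set.mem_image] at hu
  rcases hu with rfl | ⟨σ, -, rfl⟩
  exacts [shift_mem_admissible q₀, liftGen_mem_admissible q₀ σ]

theorem exists_lift_mem_closure {Sig : Finset (Transf Q)} {t : Transf Q}
    (ht : t ∈ Subsemigroup.closure (Sig : Set (Transf Q))) :
    ∃ h ∈ Subsemigroup.closure (gens q₀ Sig : Set (Transf (States Q))),
      (∀ q, h (inQ q) = inQ (t q)) ∧ h e₂ = e₂ := by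
  induction ht using Subsemigroup.closure_induction with
  | mem σ hσ =>
    exact ⟨liftGen q₀ σ,
      Subsemigroup.subset_closure (Finset.mem_cons_of_mem (Finset.mem_map_of_mem _ hσ)),
      fun q => rfl, rfl⟩
  | mul a b _ _ iha ihb =>
    obtain ⟨h₁, m₁, hQ₁, he₁⟩ := iha
    obtain ⟨h₂, m₂, hQ₂, he₂⟩ := ihb
    exact ⟨h₁ * h₂, mul_mem m₁ m₂, fun q => by simp [hQ₁, hQ₂], by simp [he₁, he₂]⟩

def sandwich (h : Transf (States Q)) : Transf (States Q) := shift q₀ * h * shift q₀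

theorem sandwich_apply_e₁ {h : Transf (States Q)} (he₂ : h e₂ = e₂) : sandwich q₀ h e₁ = e₃ := by
  simp [sandwich, shift, he₂]

theorem sandwich_apply_inQ {h : Transf (States Q)} {t : Transf Q}
    (hQ : ∀ q, h (inQ q) = inQ (t q)) (q : Q) : sandwich q₀ h (inQ q) = inQ (t q) := by
  show shift q₀ (h (inQ q)) = _
  rw [hQ]
  rfl

theorem sandwich_apply_mem_range {h : Transf (States Q)} (hh : h ∈ admissible) :
    ∀ x ≠ e₁, sandwich q₀ h x ∈ Set.range inQ := by
  have hs := (shift_mem_admissible q₀).1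
  rintro (_ | _ | _ | q) hx
  · exact absurd rfl hx
  · exact hs hh.2.2
  · exact hs (hh.1 ⟨q₀, rfl⟩)
  · exact hs (hh.1 (hs ⟨q, rfl⟩))

theorem eq_of_leJ {M : Subsemigroup (Transf (States Q))} (hM : M ≤ admissible) {v w : M}
    (hv : v.1 e₁ = e₃) (hw₁ : w.1 e₁ = e₃) (hw : ∀ x ≠ e₁, w.1 x ∈ Set.range inQ)
    (hvw : leJ v w) : v = w := by
  have e₃_notMem : e₃ ∉ Set.range (inQ : Q → States Q) := by simp [inQ]
  rcases eq_or_exists_of_leJ hvw with hvw | ⟨a, rfl⟩ | ⟨b, rfl⟩ | ⟨a, b, rfl⟩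
  · exact hvw
  all_goals refine absurd ?_ e₃_notMem; rw [← hv]
  · exact hw _ ((hM a.2).2.1 e₁)
  · show b.1 (w.1 e₁) ∈ _
    rw [hw₁]
    exact (hM b.2).2.2
  · exact (hM b.2).1 (hw _ ((hM a.2).2.1 e₁))

theorem exists_leJ_injective (Sig : Finset (Transf Q)) :
    ∃ g : Subsemigroup.closure (Sig : Set (Transf Q)) →
        Subsemigroup.closure (gens q₀ Sig : Set (Transf (States Q))),
      ∀ s t, leJ (g s) (g t) → s = t := by
  choose h hmem hQ he₂ using fun t : Subsemigroup.closure (Sig : Set (Transf Q)) =>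
    exists_lift_mem_closure q₀ t.2
  have shift_mem : shift q₀ ∈ Subsemigroup.closure (gens q₀ Sig : Set (Transf (States Q))) :=
    Subsemigroup.subset_closure (Finset.mem_cons_self _ _)
  refine ⟨fun t => ⟨sandwich q₀ (h t), mul_mem (mul_mem shift_mem (hmem t)) shift_mem⟩,
    fun s t hst => ?_⟩
  have hM := closure_gens_le_admissible q₀ Sig
  have hsandwich := eq_of_leJ hM (sandwich_apply_e₁ q₀ (he₂ s)) (sandwich_apply_e₁ q₀ (he₂ t))
    (sandwich_apply_mem_range q₀ (hM (hmem t))) hst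
  refine Subtype.ext (funext fun q => inQ_injective ?_)
  rw [← sandwich_apply_inQ q₀ (hQ s), ← sandwich_apply_inQ q₀ (hQ t)]
  exact congrFun (congrArg Subtype.val hsandwich) (inQ q)

end Extension

/-- For every transformation semigroup `T` on `n` states
generated by a finite set `Sig`, there is a transformation semigroup `U` on
`n + 3` states, generated by `|Sig| + 1` transformations, having at least `|T|`
pairwise distinct `J`-classes (witnessed by a map `g : T → U` whose values are
pairwise non-`J`-equivalent). -/
theorem many_J_classes
    (n : ℕ) (Q : Type) [Fintype Q] (hQ : Fintype.card Q = n)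
    (Sig : Finset (Transf Q)) (T : Subsemigroup (Transf Q))
    (hT : T = Subsemigroup.closure (Sig : Set (Transf Q))) :
    ∃ (Gam : Finset (Transf (Fin (n + 3)))) (U : Subsemigroup (Transf (Fin (n + 3)))),
      Gam.card = Sig.card + 1 ∧
      U = Subsemigroup.closure (Gam : Set (Transf (Fin (n + 3)))) ∧
      ∃ g : ↥T → ↥U, ∀ x y : ↥T, eqvJ (g x) (g y) → x = y := by
  subst hT
  rcases isEmpty_or_nonempty Q with hQ₀ | ⟨⟨q₀⟩⟩
  · have : Subsingleton (Transf Q) := inferInstanceAs (Subsingleton (Q → Q))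
    obtain ⟨G, hG⟩ := Transf.exists_finset_card_eq (α := Fin (n + 3)) (k := Sig.card + 1)
      (by simpa using Sig.card_le_one_of_subsingleton.trans (by omega))
    obtain ⟨u, hu⟩ := Finset.card_pos.mp (by omega : 0 < G.card)
    exact ⟨G, _, hG, rfl, fun _ => ⟨u, Subsemigroup.subset_closure hu⟩,
      fun x y _ => Subsingleton.elim x y⟩
  · obtain ⟨g, hg⟩ := Extension.exists_leJ_injective q₀ Sig
    let e : Extension.States Q ≃ Fin (n + 3) := Fintype.equivFinOfCardEq (by simp [hQ])
    obtain ⟨g', hg'⟩ := exists_leJ_injective_map (Transf.congr e) _ g hg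
    exact ⟨_, _, by simp [Extension.card_gens], rfl, g', fun x y h => hg' x y h.1⟩
end

section
/- Let P be a partial transformation semigroup on a set of n states. Then the R-height of P is at most 2^n; that is, every R-chain in P has length at most 2^n. -/
/-- Partial transformations on `Q` (partial functions `Q → Q`), with
left-to-right composition: `q·(fg) = (q·f)·g`. -/
def PTrans (Q : Type*) : Type _ := Q → Option Q

instance {Q : Type*} : Mul (PTrans Q) := ⟨fun f g => fun q => (f q).bind g⟩

instance {Q : Type*} : Semigroup (PTrans Q) where
  mul_assoc f g h := by
    funext q
    show ((f q).bind g).bind h = (f q).bind (fun x => (g x).bind h)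
    cases f q <;> rfl

section Green
variable {S : Type*} [Semigroup S]

/-- Green's strict order `s <_R t`. -/
def ltR (s t : S) : Prop := leR s t ∧ ¬ leR t s

/-- An `R`-chain `(s 0, s 1, …, s (ℓ-1))` of length `ℓ`: each element is strictly
`R`-below its predecessor. -/
def IsRChain (ℓ : ℕ) (s : ℕ → S) : Prop := ∀ i : ℕ, i + 1 < ℓ → ltR (s (i + 1)) (s i)

end Green

/-!
Send `a ∈ P` to the family of ranges of the elements of `aP¹`: a nonempty set of subsets of `Q`,
hence of size at most `2 ^ n`, which shrinks strictly along `<_R`. For the strictness, let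
`a = bz` and suppose `range (ay) = range b`. With `w = zy` and `e = w ^ k` an idempotent power,
`range (be) = range b`; but an idempotent partial map sending `range b` onto itself fixes it
pointwise, so `b = be = a(y w ^ (k - 1))`, i.e. `b ≤_R a`.
-/

section Green

variable {S : Type*} [Semigroup S]

theorem coe_mem_rIdeal_self (s : S) : (s : WithOne S) ∈ rIdeal s :=
  ⟨1, (mul_one _).symm⟩

theorem leR_iff_coe_mem_rIdeal {s t : S} : leR s t ↔ (s : WithOne S) ∈ rIdeal t := by
  refine ⟨fun h => h (coe_mem_rIdeal_self s), ?_⟩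
  rintro ⟨z, hz⟩ x ⟨y, rfl⟩
  exact ⟨z * y, by rw [hz, mul_assoc]⟩

end Green

theorem exists_pos_isIdempotentElem_pow {M : Type*} [Monoid M] [Finite M] (w : M) :
    ∃ k, 0 < k ∧ IsIdempotentElem (w ^ k) := by
  obtain ⟨i, j, hij, hwij⟩ : ∃ i j, i < j ∧ w ^ i = w ^ j := by
    obtain ⟨i, j, hne, heq⟩ := Finite.exists_ne_map_eq_of_infinite (w ^ · : ℕ → M)
    rcases hne.lt_or_gt with h | h
    exacts [⟨i, j, h, heq⟩, ⟨j, i, h, heq.symm⟩]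
  have periodic : ∀ t, w ^ (i + (j - i) * t) = w ^ i := by
    intro t
    induction t with
    | zero => simp
    | succ t ih =>
      rw [mul_add_one, ← add_assoc, pow_add, ih, ← pow_add, Nat.add_sub_cancel' hij.le, hwij]
  -- a multiple of the period `j - i` beyond the preperiod `i`
  set k := (j - i) * (i + 1)
  have hik : i < k := Nat.lt_of_lt_of_le i.lt_succ_self (Nat.le_mul_of_pos_left _ (by omega))
  refine ⟨k, by omega, ?_⟩
  calc w ^ k * w ^ k = w ^ (k - i) * w ^ (i + (j - i) * (i + 1)) := by
        rw [← pow_add, ← pow_add]; congr 1; omega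
    _ = w ^ k := by rw [periodic, ← pow_add, Nat.sub_add_cancel hik.le]

namespace PTrans

variable {Q : Type*}

instance : Monoid (PTrans Q) where
  one := some
  one_mul _ := rfl
  mul_one f := by
    funext q
    show (f q).bind some = f q
    cases f q <;> rfl

instance [Finite Q] : Finite (PTrans Q) := inferInstanceAs (Finite (Q → Option Q))

def range (f : PTrans Q) : Set Q := {q | ∃ p, f p = some q}

theorem mem_range_mul {f g : PTrans Q} {q : Q} :
    q ∈ (f * g).range ↔ ∃ a ∈ f.range, g a = some q := by
  constructor
  · rintro ⟨p, hp⟩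
    obtain ⟨a, ha, hg⟩ := Option.bind_eq_some_iff.mp hp
    exact ⟨a, ⟨p, ha⟩, hg⟩
  · rintro ⟨a, ⟨p, hp⟩, hg⟩
    exact ⟨p, show (f p).bind g = some q by rw [hp]; exact hg⟩

theorem range_mul_congr {f g : PTrans Q} (h : f.range = g.range) (k : PTrans Q) :
    (f * k).range = (g * k).range := by
  ext q
  simp only [mem_range_mul, h]

theorem range_mul_pow_eq {f w : PTrans Q} (h : (f * w).range = f.range) (k : ℕ) :
    (f * w ^ k).range = f.range := by
  induction k with
  | zero => rw [pow_zero, mul_one]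
  | succ k ih => rw [pow_succ, ← mul_assoc, range_mul_congr ih, h]

theorem mul_eq_self_of_range_mul_eq {f e : PTrans Q} (he : IsIdempotentElem e)
    (h : (f * e).range = f.range) : f * e = f := by
  funext q
  show (f q).bind e = f q
  cases hfq : f q with
  | none => rfl
  | some a =>
    obtain ⟨p, hp⟩ : a ∈ (f * e).range := h ▸ ⟨q, hfq⟩
    obtain ⟨c, -, hca⟩ := Option.bind_eq_some_iff.mp hp
    have hee : (e c).bind e = e c := congrFun he c
    rw [hca] at hee
    exact hee

theorem exists_mul_pow_succ_eq_self [Finite Q] {f w : PTrans Q} (h : (f * w).range = f.range) :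
    ∃ k, f * w ^ (k + 1) = f := by
  obtain ⟨k, hk, he⟩ := exists_pos_isIdempotentElem_pow w
  obtain ⟨m, rfl⟩ := Nat.exists_eq_succ_of_ne_zero hk.ne'
  exact ⟨m, mul_eq_self_of_range_mul_eq he (range_mul_pow_eq h _)⟩

variable (P : Subsemigroup (PTrans Q))

noncomputable def evalWithOne : WithOne P →* PTrans Q := WithOne.lift (MulMemClass.subtype P)

theorem evalWithOne_coe (a : P) : evalWithOne P a = a :=
  WithOne.lift_coe _ _

theorem coe_mul_eq_coe_of_evalWithOne_eq {a b : P} {x : WithOne P}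
    (h : evalWithOne P (a * x) = evalWithOne P b) : (a : WithOne P) * x = b := by
  induction x with
  | one => rw [mul_one, evalWithOne_coe, evalWithOne_coe] at h; rw [mul_one, Subtype.ext h]
  | coe x =>
    rw [← WithOne.coe_mul, evalWithOne_coe, evalWithOne_coe] at h
    rw [← WithOne.coe_mul, Subtype.ext h]

def rIdealRanges (a : P) : Set (Set Q) := (fun x => (evalWithOne P x).range) '' rIdeal a

theorem rIdealRanges_nonempty (a : P) : (rIdealRanges P a).Nonempty :=
  ⟨_, _, coe_mem_rIdeal_self a, rfl⟩

theorem leR_of_rIdealRanges_subset [Finite Q] {a b : P} (hab : leR a b)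
    (hsub : rIdealRanges P b ⊆ rIdealRanges P a) : leR b a := by
  obtain ⟨z, hz⟩ := leR_iff_coe_mem_rIdeal.mp hab
  obtain ⟨_, ⟨y, rfl⟩, hy : (evalWithOne P (a * y)).range = (evalWithOne P b).range⟩ :=
    hsub ⟨_, coe_mem_rIdeal_self b, rfl⟩
  set w := z * y
  have hw : (evalWithOne P b * evalWithOne P w).range = (evalWithOne P b).range := by
    rw [← map_mul, ← mul_assoc, ← hz, hy]
  obtain ⟨k, hk⟩ := exists_mul_pow_succ_eq_self hw
  have hfac : (a : WithOne P) * (y * w ^ k) = b * w ^ (k + 1) := by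
    rw [hz, pow_succ', mul_assoc, mul_assoc]
  refine leR_iff_coe_mem_rIdeal.mpr ⟨y * w ^ k, (coe_mul_eq_coe_of_evalWithOne_eq P ?_).symm⟩
  rw [hfac, map_mul, map_pow, hk]

theorem rIdealRanges_ssubset_of_ltR [Finite Q] {a b : P} (h : ltR a b) :
    rIdealRanges P a ⊂ rIdealRanges P b :=
  ⟨Set.image_mono h.1, fun hsub => h.2 (leR_of_rIdealRanges_subset P h.1 hsub)⟩

end PTrans

theorem length_le_of_strictAnti_of_pos {N : ℕ → ℕ} {ℓ : ℕ}
    (hdec : ∀ i, i + 1 < ℓ → N (i + 1) < N i) (hpos : ∀ i < ℓ, 0 < N i) : ℓ ≤ N 0 := by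
  induction ℓ generalizing N with
  | zero => exact Nat.zero_le _
  | succ ℓ ih =>
    rcases Nat.eq_zero_or_pos ℓ with rfl | hℓ
    · exact hpos 0 Nat.one_pos
    · have htail := ih (N := fun i => N (i + 1)) (fun i hi => hdec (i + 1) (by omega))
        (fun i hi => hpos (i + 1) (by omega))
      have := hdec 0 (by omega)
      omega

open PTrans in
/-- The `R`-height of a partial transformation semigroup on `n`
states is at most `2 ^ n`: every `R`-chain has length at most `2 ^ n`. -/
theorem R_height_le_two_pow
    (n : ℕ) (Q : Type) [Fintype Q] (hQ : Fintype.card Q = n)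
    (P : Subsemigroup (PTrans Q))
    (ℓ : ℕ) (s : ℕ → ↥P) (hs : IsRChain ℓ s) :
    ℓ ≤ 2 ^ n := by
  set N := fun i => (rIdealRanges P (s i)).ncard
  calc ℓ ≤ N 0 :=
        length_le_of_strictAnti_of_pos
          (fun i hi => Set.ncard_lt_ncard (rIdealRanges_ssubset_of_ltR P (hs i hi)))
          (fun i _ => (Set.ncard_pos).mpr (rIdealRanges_nonempty P (s i)))
    _ ≤ Nat.card (Set Q) := Set.ncard_le_card _
    _ = 2 ^ n := by rw [Nat.card_eq_fintype_card, Fintype.card_set, hQ]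
end

section
/- For every even natural number n, there exists a token machine with n cells which admits a maximal progressing computation of length at least binomial(n, n/2) − 1. -/
/-- The image `R·f` of a configuration `R` under a partial transformation `f`. -/
def pApply {Q : Type*} (R : Set Q) (f : PTrans Q) : Set Q :=
  {q' | ∃ q ∈ R, f q = some q'}

/-- A computation of length `ℓ` in the token machine `(C, I)`, given by
configurations `R 0, …, R ℓ` and instructions `ι 1, …, ι ℓ`: all configurations
have the same cardinality and `R (i-1) · (ι i) = R i`. -/
def IsComputation {C : Type*} (I : Set (PTrans C)) (ℓ : ℕ)
    (R : ℕ → Set C) (ι : ℕ → PTrans C) : Prop :=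
  (∀ i : ℕ, 1 ≤ i → i ≤ ℓ → ι i ∈ I ∧ pApply (R (i - 1)) (ι i) = R i) ∧
  (∀ i : ℕ, i ≤ ℓ → (R i).ncard = (R 0).ncard)

/-- A computation is progressing if its configurations are pairwise distinct and
any instruction other than the one used strictly decreases the cardinality. -/
def IsProgressing {C : Type*} (I : Set (PTrans C)) (ℓ : ℕ)
    (R : ℕ → Set C) (ι : ℕ → PTrans C) : Prop :=
  (∀ i : ℕ, i ≤ ℓ → ∀ j : ℕ, j ≤ ℓ → R i = R j → i = j) ∧
  (∀ i : ℕ, 1 ≤ i → i ≤ ℓ → ∀ κ ∈ I, κ ≠ ι i →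
    (pApply (R (i - 1)) κ).ncard < (R i).ncard)

/-- A computation is maximal if every instruction strictly decreases the
cardinality of the final configuration. -/
def IsMaximalComp {C : Type*} (I : Set (PTrans C)) (ℓ : ℕ) (R : ℕ → Set C) : Prop :=
  ∀ κ ∈ I, (pApply (R ℓ) κ).ncard < (R ℓ).ncard


noncomputable def stepFun {n : ℕ} (A B : Finset (Fin n)) : Fin n → Fin n :=
  if h : A.card = B.card then
    fun q => if hq : q ∈ A then ((Finset.equivOfCardEq h) ⟨q, hq⟩ : Fin n) else q
  else id

noncomputable def stepTrans {n : ℕ} (A B : Finset (Fin n)) : PTrans (Fin n) :=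
  fun q => if q ∈ A then some (stepFun A B q) else none

lemma stepFun_injOn {n : ℕ} {A B : Finset (Fin n)} (h : A.card = B.card) :
    Set.InjOn (stepFun A B) ↑A := by
  intro x hx y hy hxy
  simp only [Finset.coe_mem, Finset.mem_coe] at hx hy
  rw [stepFun, dif_pos h, ] at hxy
  simp only [dif_pos hx, dif_pos hy] at hxy
  have := (Finset.equivOfCardEq h).injective (Subtype.ext hxy)
  exact congrArg Subtype.val this

lemma stepFun_image {n : ℕ} {A B : Finset (Fin n)} (h : A.card = B.card) :
    stepFun A B '' ↑A = ↑B := by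
  ext b
  constructor
  · rintro ⟨a, ha, rfl⟩
    simp only [Finset.mem_coe] at ha ⊢
    rw [stepFun, dif_pos h]
    simp only [dif_pos ha]
    exact ((Finset.equivOfCardEq h) ⟨a, ha⟩).2
  · intro hb
    simp only [Finset.mem_coe] at hb
    refine ⟨((Finset.equivOfCardEq h).symm ⟨b, hb⟩ : Fin n), by simp, ?_⟩
    rw [stepFun, dif_pos h]
    have hm : ((Finset.equivOfCardEq h).symm ⟨b, hb⟩ : Fin n) ∈ A :=
      ((Finset.equivOfCardEq h).symm ⟨b, hb⟩).2
    simp only [dif_pos hm]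
    have : (⟨((Finset.equivOfCardEq h).symm ⟨b, hb⟩ : Fin n), hm⟩ : A)
        = (Finset.equivOfCardEq h).symm ⟨b, hb⟩ := rfl
    rw [this, Equiv.apply_symm_apply]

lemma pApply_stepTrans {n : ℕ} (X A B : Finset (Fin n)) :
    pApply ↑X (stepTrans A B) = stepFun A B '' ↑(X ∩ A) := by
  ext q'
  simp only [pApply, Set.mem_setOf_eq, stepTrans, Set.mem_image, Finset.coe_inter,
    Set.mem_inter_iff, Finset.mem_coe]
  constructor
  · rintro ⟨q, hq, hq'⟩
    by_cases hA : q ∈ A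
    · rw [if_pos hA] at hq'
      exact ⟨q, ⟨hq, hA⟩, Option.some_injective _ hq'⟩
    · rw [if_neg hA] at hq'; exact absurd hq' (by simp)
  · rintro ⟨q, ⟨hq, hA⟩, rfl⟩
    exact ⟨q, hq, by rw [if_pos hA]⟩

lemma pApply_stepTrans_ncard {n : ℕ} (X A B : Finset (Fin n)) (h : A.card = B.card) :
    (pApply ↑X (stepTrans A B)).ncard = (X ∩ A).card := by
  rw [pApply_stepTrans]
  rw [Set.ncard_image_of_injOn ((stepFun_injOn h).mono (by simp [Finset.inter_subset_right]))]
  exact Set.ncard_coe_finset _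

lemma pApply_stepTrans_self {n : ℕ} (A B : Finset (Fin n)) (h : A.card = B.card) :
    pApply ↑A (stepTrans A B) = ↑B := by
  rw [pApply_stepTrans, Finset.inter_self, stepFun_image h]

lemma inter_card_lt {n : ℕ} {k : ℕ} {X A : Finset (Fin n)}
    (hX : X.card = k) (hA : A.card = k) (hne : X ≠ A) : (X ∩ A).card < k := by
  rcases lt_or_eq_of_le (le_trans (Finset.card_le_card (Finset.inter_subset_left)) hX.le)
    with h | h
  · exact h
  · exfalso
    have h1 : X ∩ A = X := Finset.eq_of_subset_of_card_le Finset.inter_subset_left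
      (by omega)
    have h2 : X ⊆ A := by rw [← h1]; exact Finset.inter_subset_right
    exact hne (Finset.eq_of_subset_of_card_le h2 (by omega))


/-- For every even `n`, there is a token machine with `n` cells
admitting a maximal progressing computation of length at least
`binomial(n, n/2) - 1`. -/
theorem token_machine_long_computation_growing_alphabet
    (n : ℕ) (hn : Even n) :
    ∃ I : Set (PTrans (Fin n)), I.Finite ∧
      ∃ (ℓ : ℕ) (R : ℕ → Set (Fin n)) (ι : ℕ → PTrans (Fin n)),
        Nat.choose n (n / 2) - 1 ≤ ℓ ∧
        IsComputation I ℓ R ι ∧ IsProgressing I ℓ R ι ∧ IsMaximalComp I ℓ R := by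
  classical
  set k := n / 2 with hk
  set L := (Finset.univ.powersetCard k : Finset (Finset (Fin n))).toList with hLdef
  have hlen : L.length = n.choose k := by
    simp [hLdef, Finset.length_toList, Finset.card_powersetCard]
  have hnodup : L.Nodup := Finset.nodup_toList _
  have hpos : 1 ≤ L.length := by
    rw [hlen]; exact Nat.choose_pos (Nat.div_le_self n 2)
  set ℓ := L.length - 1 with hℓ
  set S : ℕ → Finset (Fin n) := fun i => L.getD i ∅ with hSdef
  have hlt : ∀ i, i ≤ ℓ → i < L.length := fun i hi => by omega
  have hSget : ∀ i (h : i ≤ ℓ), S i = L[i]'(hlt i h) := fun i h =>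
    List.getD_eq_getElem L ∅ (hlt i h)
  have hScard : ∀ i, i ≤ ℓ → (S i).card = k := by
    intro i hi
    have : S i ∈ L := by rw [hSget i hi]; exact List.getElem_mem _
    rw [hLdef, Finset.mem_toList, Finset.mem_powersetCard] at this
    exact this.2
  have hSinj : ∀ i, i ≤ ℓ → ∀ j, j ≤ ℓ → S i = S j → i = j := by
    intro i hi j hj hij
    rw [hSget i hi, hSget j hj] at hij
    exact hnodup.getElem_inj_iff.mp hij
  set ι : ℕ → PTrans (Fin n) := fun i => stepTrans (S (i - 1)) (S i) with hιdef
  set I : Set (PTrans (Fin n)) := ι '' {i | 1 ≤ i ∧ i ≤ ℓ} with hIdef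
  have hcardeq : ∀ i, 1 ≤ i → i ≤ ℓ → (S (i - 1)).card = (S i).card := by
    intro i h1 h2
    rw [hScard _ (by omega), hScard _ h2]
  refine ⟨I, ?_, ℓ, fun i => ↑(S i), ι, by omega, ?_, ?_, ?_⟩
  · exact Set.Finite.image _ ((Set.finite_Icc 1 ℓ).subset (fun x hx => hx))
  · constructor
    · intro i h1 h2
      refine ⟨⟨i, ⟨h1, h2⟩, rfl⟩, ?_⟩
      exact pApply_stepTrans_self _ _ (hcardeq i h1 h2)
    · intro i hi
      rw [Set.ncard_coe_finset, Set.ncard_coe_finset, hScard i hi, hScard 0 (by omega)]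
  · constructor
    · intro i hi j hj hij
      exact hSinj i hi j hj (by exact_mod_cast Finset.coe_injective hij)
    · rintro i h1 h2 κ ⟨j, ⟨hj1, hj2⟩, rfl⟩ hne
      have hcj := hcardeq j hj1 hj2
      rw [pApply_stepTrans_ncard _ _ _ hcj, Set.ncard_coe_finset, hScard i h2]
      refine inter_card_lt (hScard _ (by omega)) (hScard _ (by omega)) ?_
      intro heq
      have : i - 1 = j - 1 := hSinj _ (by omega) _ (by omega) heq
      have : i = j := by omega
      exact hne (by rw [this])
  · rintro κ ⟨j, ⟨hj1, hj2⟩, rfl⟩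
    have hcj := hcardeq j hj1 hj2
    rw [pApply_stepTrans_ncard _ _ _ hcj, Set.ncard_coe_finset, hScard ℓ le_rfl]
    refine inter_card_lt (hScard _ le_rfl) (hScard _ (by omega)) ?_
    intro heq
    have : ℓ = j - 1 := hSinj _ le_rfl _ (by omega) heq
    omega
end

section
/- Let N be an n-bit binary counter, let R be a valid configuration of N, and let u be a word over the instruction set I of N such that |R·u| = |R|. Then R·u is a valid configuration of N. -/
/-- The image `R·u` of a configuration under a word of partial transformations. -/
def wordApply {Q : Type*} (R : Set Q) (u : List (PTrans Q)) : Set Q :=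
  u.foldl pApply R

/-! ### The `n`-bit binary counter
Cells: `(0, i) = dᵢ` (tape `S`), `(1, i) = cᵢ` (tape `T`), `(2, i) = c̄ᵢ`
(tape `T̄`). -/

variable (n : ℕ) [NeZero n]

/-- The cell `dᵢ` of the tape `S`. -/
def dCell (i : Fin n) : Fin 3 × Fin n := (0, i)

/-- The cell `cᵢ` of the tape `T`. -/
def cCell (i : Fin n) : Fin 3 × Fin n := (1, i)

/-- The cell `c̄ᵢ` of the tape `T̄`. -/
def cbarCell (i : Fin n) : Fin 3 × Fin n := (2, i)

/-- `ι_rotl` : cyclic left rotation on all three tapes. -/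
def rotl : PTrans (Fin 3 × Fin n) := fun x => some (x.1, x.2 + 1)

/-- `ι_rotr` : cyclic right rotation on all three tapes. -/
def rotr : PTrans (Fin 3 × Fin n) := fun x => some (x.1, x.2 - 1)

/-- `ι_{=0}` : undefined on `c₀`, identity on all other cells. -/
def eqz : PTrans (Fin 3 × Fin n) := fun x => if x = cCell n 0 then none else some x

/-- `ι_{=1}` : undefined on `c̄₀`, identity on all other cells. -/
def eqo : PTrans (Fin 3 × Fin n) := fun x => if x = cbarCell n 0 then none else some x

/-- `ι_sync` : undefined on `d₁, …, d_{n-1}`, identity on all other cells. -/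
def syncI : PTrans (Fin 3 × Fin n) :=
  fun x => if x.1 = 0 ∧ x.2 ≠ 0 then none else some x

/-- `ι_off` : undefined on `d₀`, identity on all other cells. -/
def offI : PTrans (Fin 3 × Fin n) := fun x => if x = dCell n 0 then none else some x

/-- `ι_inc` : maps `c̄₀` to `c₀`, undefined on `c₀`, identity elsewhere. -/
def incI : PTrans (Fin 3 × Fin n) :=
  fun x => if x = cbarCell n 0 then some (cCell n 0)
    else if x = cCell n 0 then none else some x

/-- `ι_dec` : maps `c₀` to `c̄₀`, undefined on `c̄₀`, identity elsewhere. -/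
def decI : PTrans (Fin 3 × Fin n) :=
  fun x => if x = cCell n 0 then some (cbarCell n 0)
    else if x = cbarCell n 0 then none else some x

/-- The instruction set of the `n`-bit binary counter. -/
def counterI : Set (PTrans (Fin 3 × Fin n)) :=
  {rotl n, rotr n, eqz n, eqo n, syncI n, offI n, incI n, decI n}

/-- A configuration is valid if it contains exactly one cell of the tape `S` and,
for each `i`, exactly one of `cᵢ`, `c̄ᵢ`. -/
def ValidConf (R : Set (Fin 3 × Fin n)) : Prop :=
  (∃! i : Fin n, dCell n i ∈ R) ∧ ∀ i : Fin n, (cCell n i ∈ R ↔ cbarCell n i ∉ R)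

open Classical in
/-- The value of the counter under a configuration `R`: `Σ_{i : cᵢ ∈ R} 2^i`. -/
noncomputable def counterValue (R : Set (Fin 3 × Fin n)) : ℕ :=
  ∑ i : Fin n, if cCell n i ∈ R then 2 ^ (i : ℕ) else 0

/-! Where an instruction is defined it acts as a permutation of the cells: a rotation of the three
tapes, the transposition `c₀ ↔ c̄₀`, or the identity, and each of these preserves validity. A cell
of `R` on which an instruction is undefined is lost, and no step enlarges a configuration, so
`|R·u| = |R|` forces every step of `u` to be defined on the whole current configuration. -/

section PartialTransformations

theorem ite_none_some_eq_some {α : Type*} {p : Prop} [Decidable p] {x : α}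
    (h : (if p then none else some x) ≠ none) : (if p then none else some x) = some x := by
  split_ifs at h ⊢
  · exact absurd rfl h
  · rfl

variable {Q : Type*} {R : Set Q} {f : PTrans Q}

theorem pApply_eq_image {g : Q → Q} (hfg : ∀ x ∈ R, f x = some (g x)) :
    pApply R f = g '' R := by
  ext y
  constructor
  · rintro ⟨x, hx, hfx⟩
    exact ⟨x, hx, Option.some_injective _ ((hfg x hx).symm.trans hfx)⟩
  · rintro ⟨x, hx, rfl⟩
    exact ⟨x, hx, hfg x hx⟩

variable [Finite Q]

theorem ncard_pApply_le (R : Set Q) (f : PTrans Q) : (pApply R f).ncard ≤ R.ncard :=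
  calc (pApply R f).ncard ≤ ((fun q => (f q).getD q) '' R).ncard :=
        Set.ncard_le_ncard fun y ⟨x, hx, hfx⟩ => ⟨x, hx, by simp [hfx]⟩
    _ ≤ R.ncard := Set.ncard_image_le

theorem ncard_wordApply_le (R : Set Q) (u : List (PTrans Q)) :
    (wordApply R u).ncard ≤ R.ncard := by
  induction u generalizing R with
  | nil => exact le_rfl
  | cons f u ih => exact (ih (pApply R f)).trans (ncard_pApply_le R f)

theorem ncard_pApply_lt_of_eq_none {x : Q} (hx : x ∈ R) (hfx : f x = none) :
    (pApply R f).ncard < R.ncard := by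
  have hsub : pApply R f ⊆ pApply (R \ {x}) f := by
    rintro y ⟨z, hz, hfz⟩
    refine ⟨z, ⟨hz, ?_⟩, hfz⟩
    rintro rfl
    simp [hfx] at hfz
  calc (pApply R f).ncard ≤ (pApply (R \ {x}) f).ncard := Set.ncard_le_ncard hsub
    _ ≤ (R \ {x}).ncard := ncard_pApply_le _ _
    _ < R.ncard := Set.ncard_sdiff_singleton_lt_of_mem hx

theorem pApply_eq_image_of_ncard_eq {g : Q → Q} (hfg : ∀ x, f x ≠ none → f x = some (g x))
    (hcard : (pApply R f).ncard = R.ncard) : pApply R f = g '' R :=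
  pApply_eq_image fun x hx =>
    hfg x fun hfx => (ncard_pApply_lt_of_eq_none hx hfx).ne hcard

theorem pApply_eq_self_of_ncard_eq (hf : ∀ x, f x ≠ none → f x = some x)
    (hcard : (pApply R f).ncard = R.ncard) : pApply R f = R := by
  rw [pApply_eq_image_of_ncard_eq (g := id) hf hcard, Set.image_id]

theorem wordApply_induction {I : Set (PTrans Q)} (P : Set Q → Prop)
    (step : ∀ R, ∀ f ∈ I, P R → (pApply R f).ncard = R.ncard → P (pApply R f))
    {u : List (PTrans Q)} (hu : ∀ f ∈ u, f ∈ I) (hR : P R)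
    (hcard : (wordApply R u).ncard = R.ncard) : P (wordApply R u) := by
  induction u generalizing R with
  | nil => exact hR
  | cons f u ih =>
    have hle : (wordApply (pApply R f) u).ncard ≤ (pApply R f).ncard := ncard_wordApply_le _ _
    have hstep : (pApply R f).ncard = R.ncard :=
      le_antisymm (ncard_pApply_le R f) (hcard ▸ hle)
    exact ih (fun g hg => hu g (List.mem_cons_of_mem f hg))
      (step R f (hu f List.mem_cons_self) hR hstep) (hcard.trans hstep.symm)

end PartialTransformations

section Counter

variable {n}

def rotate (a : Fin n) : Fin 3 × Fin n ≃ Fin 3 × Fin n where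
  toFun x := (x.1, x.2 + a)
  invFun x := (x.1, x.2 - a)
  left_inv _ := by simp
  right_inv _ := by simp

theorem mem_image_rotate {a : Fin n} {R : Set (Fin 3 × Fin n)} {k : Fin 3} {i : Fin n} :
    (k, i) ∈ rotate a '' R ↔ (k, i - a) ∈ R := by
  rw [Set.mem_image_equiv]
  rfl

theorem ValidConf.image_rotate {R : Set (Fin 3 × Fin n)} (hR : ValidConf n R) (a : Fin n) :
    ValidConf n (rotate a '' R) := by
  simp only [ValidConf, dCell, cCell, cbarCell, mem_image_rotate] at hR ⊢
  refine ⟨(Equiv.subRight a).existsUnique_congr_left.mpr ?_, fun i => hR.2 (i - a)⟩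
  simpa using hR.1

theorem ValidConf.image_swap {R : Set (Fin 3 × Fin n)} (hR : ValidConf n R) :
    ValidConf n (Equiv.swap (cCell n 0) (cbarCell n 0) '' R) := by
  have hd (i : Fin n) : Equiv.swap (cCell n 0) (cbarCell n 0) (dCell n i) = dCell n i :=
    Equiv.swap_apply_of_ne_of_ne (by simp [dCell, cCell]) (by simp [dCell, cbarCell])
  refine ⟨by simpa only [Set.mem_image_equiv, Equiv.symm_swap, hd] using hR.1, fun i => ?_⟩
  simp only [Set.mem_image_equiv, Equiv.symm_swap]
  rcases eq_or_ne i 0 with rfl | hi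
  · rw [Equiv.swap_apply_left, Equiv.swap_apply_right, hR.2 0]
    tauto
  · rw [Equiv.swap_apply_of_ne_of_ne (by simp [cCell, hi]) (by simp [cCell, cbarCell]),
      Equiv.swap_apply_of_ne_of_ne (by simp [cbarCell, cCell]) (by simp [cbarCell, hi])]
    exact hR.2 i

theorem incI_eq_some_swap (x : Fin 3 × Fin n) (hx : incI n x ≠ none) :
    incI n x = some (Equiv.swap (cCell n 0) (cbarCell n 0) x) := by
  unfold incI at hx ⊢
  split_ifs at hx ⊢ with h₁ h₂
  · rw [h₁, Equiv.swap_apply_right]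
  · exact absurd rfl hx
  · rw [Equiv.swap_apply_of_ne_of_ne h₂ h₁]

theorem decI_eq_some_swap (x : Fin 3 × Fin n) (hx : decI n x ≠ none) :
    decI n x = some (Equiv.swap (cCell n 0) (cbarCell n 0) x) := by
  unfold decI at hx ⊢
  split_ifs at hx ⊢ with h₁ h₂
  · rw [h₁, Equiv.swap_apply_left]
  · exact absurd rfl hx
  · rw [Equiv.swap_apply_of_ne_of_ne h₁ h₂]

theorem ValidConf.pApply_of_ncard_eq {R : Set (Fin 3 × Fin n)} (hR : ValidConf n R)
    {f : PTrans (Fin 3 × Fin n)} (hf : f ∈ counterI n) (hcard : (pApply R f).ncard = R.ncard) :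
    ValidConf n (pApply R f) := by
  rcases hf with rfl | rfl | rfl | rfl | rfl | rfl | rfl | rfl
  · rw [pApply_eq_image (f := rotl n) (g := rotate 1) fun _ _ => rfl]
    exact hR.image_rotate 1
  · rw [pApply_eq_image (f := rotr n) (g := rotate (-1))
      fun _ _ => by simp [rotr, rotate, sub_eq_add_neg]]
    exact hR.image_rotate (-1)
  · rwa [pApply_eq_self_of_ncard_eq (f := eqz n) (fun _ => ite_none_some_eq_some) hcard]
  · rwa [pApply_eq_self_of_ncard_eq (f := eqo n) (fun _ => ite_none_some_eq_some) hcard]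
  · rwa [pApply_eq_self_of_ncard_eq (f := syncI n) (fun _ => ite_none_some_eq_some) hcard]
  · rwa [pApply_eq_self_of_ncard_eq (f := offI n) (fun _ => ite_none_some_eq_some) hcard]
  · rw [pApply_eq_image_of_ncard_eq incI_eq_some_swap hcard]
    exact hR.image_swap
  · rw [pApply_eq_image_of_ncard_eq decI_eq_some_swap hcard]
    exact hR.image_swap

end Counter

/-- Applying any word over the instruction set of an `n`-bit
binary counter to a valid configuration, without decreasing its cardinality,
yields a valid configuration. -/
theorem counter_preserves_validity
    (R : Set (Fin 3 × Fin n)) (hR : ValidConf n R)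
    (u : List (PTrans (Fin 3 × Fin n))) (hu : ∀ x ∈ u, x ∈ counterI n)
    (hcard : (wordApply R u).ncard = R.ncard) :
    ValidConf n (wordApply R u) :=
  wordApply_induction (ValidConf n) (fun _ _ hf hR hcard => hR.pApply_of_ncard_eq hf hcard)
    hu hR hcard
end
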